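/- Let Φ : 𝕌 → ℂ be biholomorphic with Φ(0) = 1, Φ'(0) > 0, Φ''(0) ∈ ℝ, Re Φ > 0 on 𝕌, and suppose 2Φ'(0) − 2Φ'(0)² ≤ Φ''(0) ≤ 6Φ'(0)² − 2Φ'(0). Let g be holomorphic on 𝕌 with g(0)=0, g'(0)=1, such that z g'(z)/g(z) is subordinate to Φ. Writing g(z) = z + b₂z² + b₃z³ + ..., we have |2b₂²b₃ − b₃² − 2b₂² + 1| ≤ 1 + 2Φ'(0)² + (Φ'(0)²/4)·(3Φ'(0) − Φ''(0)/(2Φ'(0)))·(Φ''(0)/(2Φ'(0)) + Φ'(0)). -/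

import Mathlib

open Complex Metric Set Topology Filter

set_option maxHeartbeats 1600000

private lemma cabs_sub_le' (a b : ℂ) : ‖a - b‖ ≤ ‖a‖ + ‖b‖ := by
  simpa [sub_eq_add_neg] using norm_add_le a (-b)

private lemma final_real_ineq {β c x y : ℝ} (hc1 : β - 2*β^2 ≤ c) (hc2 : c ≤ 2*β^2 - β)
    (hβ : 0 < β) (hx0 : 0 ≤ x) (hx1 : x ≤ 1) (hy0 : 0 ≤ y) (hy : y ≤ 1 - x^2) :
    (β^4 - c^2/4)*x^4 + 2*β^2*x^2 + (β^2/4)*y^2 + (β*|c|/2)*x^2*y ≤ 2*β^2 + (β^4 - c^2/4) := by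
  have hβ2 : 1/2 ≤ β := by nlinarith [mul_pos hβ hβ]
  have hd : |c| ≤ 2*β^2 - β := abs_le.2 ⟨by linarith, hc2⟩
  have hd0 : 0 ≤ |c| := abs_nonneg c
  have hcc : c^2 = |c|^2 := (_root_.sq_abs c).symm
  have hD : 0 ≤ β^4 - c^2/4 := by nlinarith
  have hs1 : x^2 ≤ 1 := by nlinarith
  have h1 : (β^2/4)*y^2 + (β*|c|/2)*x^2*y ≤ (β^2/4)*(1-x^2)^2 + (β*|c|/2)*x^2*(1-x^2) := by
    have h2 : y^2 ≤ (1-x^2)^2 := by nlinarith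
    have h3 : x^2*y ≤ x^2*(1-x^2) := by nlinarith
    nlinarith [mul_nonneg (mul_nonneg hβ.le hd0) (sub_nonneg.2 h3)]
  have hf0 : 0 ≤ 2*β^2 + (β^4 - c^2/4) - β^2/4 := by nlinarith
  have hf1 : 0 ≤ 2*β^2 + 2*(β^4 - c^2/4) - β*|c|/2 := by
    nlinarith [mul_nonneg (sub_nonneg.2 hd) (by positivity : (0:ℝ) ≤ 2*β^2 + |c|)]
  have hP : 0 ≤ (1-x^2)*((2*β^2 + (β^4 - c^2/4) - β^2/4)*(1-x^2)
      + (2*β^2 + 2*(β^4 - c^2/4) - β*|c|/2)*x^2) :=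
    mul_nonneg (by nlinarith) (add_nonneg (mul_nonneg hf0 (by nlinarith)) (mul_nonneg hf1 (sq_nonneg x)))
  nlinarith [hP, h1]


private lemma mobius_key (a w : ℂ) :
    Complex.normSq (1 - (starRingEnd ℂ) a * w) - Complex.normSq (a - w)
      = (1 - Complex.normSq a) * (1 - Complex.normSq w) := by
  simp only [Complex.normSq_apply, Complex.sub_re, Complex.sub_im, Complex.mul_re, Complex.mul_im,
    Complex.one_re, Complex.one_im, Complex.conj_re, Complex.conj_im]
  ring

private lemma mobius_denom_ne {a w : ℂ} (ha : ‖a‖ < 1) (hw : ‖w‖ < 1) :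
    (1 : ℂ) - (starRingEnd ℂ) a * w ≠ 0 := by
  intro h
  have h1 : Complex.normSq (1 - (starRingEnd ℂ) a * w) = 0 := by rw [h]; simp
  have h2 := mobius_key a w
  have ha' : Complex.normSq a < 1 := by rw [← Complex.sq_norm]; nlinarith [norm_nonneg a]
  have hw' : Complex.normSq w < 1 := by rw [← Complex.sq_norm]; nlinarith [norm_nonneg w]
  nlinarith [Complex.normSq_nonneg (a - w)]

private lemma mobius_lt_one {a w : ℂ} (ha : ‖a‖ < 1) (hw : ‖w‖ < 1) :
    ‖(a - w) / (1 - (starRingEnd ℂ) a * w)‖ < 1 := by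
  rw [norm_div, div_lt_one (norm_pos_iff.mpr (mobius_denom_ne ha hw))]
  have ha' : Complex.normSq a < 1 := by rw [← Complex.sq_norm]; nlinarith [norm_nonneg a]
  have hw' : Complex.normSq w < 1 := by rw [← Complex.sq_norm]; nlinarith [norm_nonneg w]
  have h2 := mobius_key a w
  have h3 : ‖a - w‖ ^ 2 < ‖1 - (starRingEnd ℂ) a * w‖ ^ 2 := by
    rw [Complex.sq_norm, Complex.sq_norm]; nlinarith
  exact lt_of_pow_lt_pow_left₀ 2 (norm_nonneg _) h3

/-- Schwarz–Pick: first two coefficient bounds at the origin. -/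
private lemma schwarz_two {ω : ℂ → ℂ} (hω : DifferentiableOn ℂ ω (ball 0 1))
    (hmaps : MapsTo ω (ball (0:ℂ) 1) (ball (0:ℂ) 1)) (hω0 : ω 0 = 0) :
    ‖deriv ω 0‖ ≤ 1 ∧
      ‖deriv (dslope ω 0) 0‖ ≤ 1 - ‖deriv ω 0‖ ^ 2 := by
  have h0U : (0:ℂ) ∈ ball (0:ℂ) 1 := mem_ball_self one_pos
  have hUnhds : ball (0:ℂ) 1 ∈ 𝓝 (0:ℂ) := isOpen_ball.mem_nhds h0U
  have hw1 : ‖deriv ω 0‖ ≤ 1 :=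
    Complex.norm_deriv_le_one_of_mapsTo_ball hω (by rw [hω0]; exact hmaps.mono_right ball_subset_closedBall) one_pos
  refine ⟨hw1, ?_⟩
  set ψ : ℂ → ℂ := dslope ω 0 with hψ
  have ψD : DifferentiableOn ℂ ψ (ball 0 1) := (Complex.differentiableOn_dslope hUnhds).2 hω
  have ψ0 : ψ 0 = deriv ω 0 := dslope_same ω 0
  have ψbd : ∀ z ∈ ball (0:ℂ) 1, ‖ψ z‖ ≤ 1 := by
    intro z hz
    rcases eq_or_ne z 0 with rfl | hz0
    · rw [ψ0]; exact hw1
    · have hle : ‖ω z‖ ≤ ‖z‖ :=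
        Complex.norm_le_norm_of_mapsTo_ball hω (hmaps.mono_right ball_subset_closedBall) hω0 (mem_ball_zero_iff.1 hz)
      rw [hψ, dslope_of_ne _ hz0, slope_def_field, hω0]
      rw [sub_zero, sub_zero, norm_div]
      exact div_le_one_of_le₀ hle (norm_nonneg z)
  by_cases hmax : ∃ z1 ∈ ball (0:ℂ) 1, 1 ≤ ‖ψ z1‖
  · -- maximum modulus: ψ is constant, so deriv ψ 0 = 0
    obtain ⟨z1, hz1, hz1b⟩ := hmax
    have him : IsMaxOn (norm ∘ ψ) (ball (0:ℂ) 1) z1 := by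
      intro z hz
      simp only [Function.comp_apply]
      exact le_trans (ψbd z hz) hz1b
    have hconst : EqOn ψ (Function.const ℂ (ψ z1)) (ball (0:ℂ) 1) :=
      Complex.eqOn_of_isPreconnected_of_isMaxOn_norm (convex_ball (0:ℂ) 1).isPreconnected
        isOpen_ball ψD hz1 him
    have hd0 : deriv ψ 0 = 0 := by
      have : deriv ψ 0 = deriv (Function.const ℂ (ψ z1)) 0 :=
        Filter.EventuallyEq.deriv_eq (Filter.eventuallyEq_of_mem hUnhds hconst)
      rw [this]
      exact deriv_const 0 (ψ z1)
    rw [hd0]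
    simp only [norm_zero]
    nlinarith [norm_nonneg (deriv ω 0)]
  · push_neg at hmax
    have haa : ‖ψ 0‖ < 1 := hmax 0 h0U
    set a : ℂ := ψ 0 with ha
    set F : ℂ → ℂ := fun z => (a - ψ z) / (1 - (starRingEnd ℂ) a * ψ z) with hF
    have hFD : DifferentiableOn ℂ F (ball 0 1) := by
      apply DifferentiableOn.div
      · exact (differentiableOn_const a).sub ψD
      · exact (differentiableOn_const 1).sub ((differentiableOn_const _).mul ψD)
      · intro z hz; exact mobius_denom_ne haa (hmax z hz)
    have hFmaps : MapsTo F (ball (0:ℂ) 1) (ball (0:ℂ) 1) := by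
      intro z hz
      rw [mem_ball_zero_iff]
      exact mobius_lt_one haa (hmax z hz)
    have hF0 : F 0 = 0 := by rw [hF]; simp [← ha]
    have hSch : ‖deriv F 0‖ ≤ 1 :=
      Complex.norm_deriv_le_one_of_mapsTo_ball hFD (by rw [hF0]; exact hFmaps.mono_right ball_subset_closedBall) one_pos
    -- compute deriv F 0
    have hden : (1 : ℂ) - (starRingEnd ℂ) a * a ≠ 0 := mobius_denom_ne haa haa
    have hψd : DifferentiableAt ℂ ψ 0 := (ψD.differentiableAt hUnhds)
    have hnum : DifferentiableAt ℂ (fun z => a - ψ z) 0 := (differentiableAt_const a).sub hψd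
    have hden' : DifferentiableAt ℂ (fun z => 1 - (starRingEnd ℂ) a * ψ z) 0 :=
      (differentiableAt_const 1).sub ((differentiableAt_const _).mul hψd)
    have hdF : deriv F 0 = -(deriv ψ 0) / (1 - (starRingEnd ℂ) a * a) := by
      rw [hF, deriv_fun_div hnum hden' (by rw [← ha]; exact hden)]
      rw [deriv_const_sub, deriv_const_sub, deriv_const_mul _ hψd]
      rw [← ha]
      field_simp
      ring
    have habs : ‖deriv F 0‖
        = ‖deriv ψ 0‖ / (1 - Complex.normSq a) := by
      rw [hdF, norm_div, norm_neg]
      congr 1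
      have : (1 : ℂ) - (starRingEnd ℂ) a * a = ((1 - Complex.normSq a : ℝ) : ℂ) := by
        rw [mul_comm, Complex.mul_conj]
        push_cast
        ring
      rw [this, Complex.norm_real, Real.norm_eq_abs, _root_.abs_of_nonneg]
      nlinarith [Complex.sq_norm a, norm_nonneg a]
    have hpos : 0 < 1 - Complex.normSq a := by
      nlinarith [Complex.sq_norm a, norm_nonneg a]
    rw [habs, div_le_one hpos] at hSch
    calc ‖deriv ψ 0‖ ≤ 1 - Complex.normSq a := hSch
      _ = 1 - ‖deriv ω 0‖ ^ 2 := by rw [← ψ0, Complex.sq_norm]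


private lemma derivEqOn {U : Set ℂ} (hU : IsOpen U) {f₁ f₂ : ℂ → ℂ}
    (h : ∀ z ∈ U, f₁ z = f₂ z) {z : ℂ} (hz : z ∈ U) : deriv f₁ z = deriv f₂ z :=
  Filter.EventuallyEq.deriv_eq (Filter.eventuallyEq_of_mem (hU.mem_nhds hz) h)

/-- Coefficient bounds for a function subordinate to an injective Φ. -/
private lemma subordination_bounds (Φ h : ℂ → ℂ)
    (hΦ : DifferentiableOn ℂ Φ (ball 0 1)) (hΦinj : Set.InjOn Φ (ball (0:ℂ) 1))
    (hΦd0 : deriv Φ 0 ≠ 0) (hΦ0 : Φ 0 = 1)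
    (hD : DifferentiableOn ℂ h (ball 0 1)) (h_at0 : h 0 = 1)
    (hmem : ∀ z ∈ ball (0:ℂ) 1, h z ∈ Φ '' (ball (0:ℂ) 1)) :
    ∃ w1 w2 : ℂ, ‖w1‖ ≤ 1 ∧ ‖w2‖ ≤ 1 - ‖w1‖ ^ 2 ∧
      deriv h 0 = deriv Φ 0 * w1 ∧
      deriv (deriv h) 0 = iteratedDeriv 2 Φ 0 * w1 ^ 2 + 2 * deriv Φ 0 * w2 := by
  have h0U : (0:ℂ) ∈ ball (0:ℂ) 1 := mem_ball_self one_pos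
  have hUo : IsOpen (ball (0:ℂ) 1) := isOpen_ball
  have hUc : IsPreconnected (ball (0:ℂ) 1) := (convex_ball (0:ℂ) 1).isPreconnected
  have hUnhds : ball (0:ℂ) 1 ∈ 𝓝 (0:ℂ) := hUo.mem_nhds h0U
  have ΦA : AnalyticOnNhd ℂ Φ (ball 0 1) := hΦ.analyticOnNhd hUo
  have hA : AnalyticOnNhd ℂ h (ball 0 1) := hD.analyticOnNhd hUo
  by_cases hK : ∀ z ∈ ball (0:ℂ) 1, h z = 1
  · refine ⟨0, 0, by simp, by simp, ?_, ?_⟩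
    · have e1 : deriv h 0 = deriv (fun _ : ℂ => (1:ℂ)) 0 := derivEqOn hUo hK h0U
      rw [e1, deriv_const]; ring
    · have e0 : ∀ z ∈ ball (0:ℂ) 1, deriv h z = (fun _ : ℂ => (0:ℂ)) z := by
        intro z hz
        have := derivEqOn hUo hK hz
        rw [this, deriv_const]
      have e2 : deriv (deriv h) 0 = deriv (fun _ : ℂ => (0:ℂ)) 0 := derivEqOn hUo e0 h0U
      rw [e2, deriv_const]; ring
  · push_neg at hK
    obtain ⟨z1, hz1U, hz1⟩ := hK
    -- ω: the subordinating function
    set ω : ℂ → ℂ := fun z => Function.invFunOn Φ (ball 0 1) (h z) with hω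
    have wmem : ∀ z ∈ ball (0:ℂ) 1, ω z ∈ ball (0:ℂ) 1 ∧ Φ (ω z) = h z := by
      intro z hz
      rcases hmem z hz with ⟨w, hw, hww⟩
      exact ⟨Function.invFunOn_mem ⟨w, hw, hww⟩, Function.invFunOn_eq ⟨w, hw, hww⟩⟩
    have ω0 : ω 0 = 0 := by
      apply hΦinj (wmem 0 h0U).1 h0U
      rw [(wmem 0 h0U).2, h_at0, hΦ0]
    -- continuity of ω
    have ωcont : ∀ z0 ∈ ball (0:ℂ) 1, ContinuousAt ω z0 := by
      intro z0 hz0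
      have hw0U : ω z0 ∈ ball (0:ℂ) 1 := (wmem z0 hz0).1
      rcases (ΦA _ hw0U).eventually_constant_or_nhds_le_map_nhds with hc | hle
      · exfalso
        have h3 : ∀ᶠ w in 𝓝[≠] (ω z0), Φ w = Φ (ω z0) ∧ w ∈ ball (0:ℂ) 1 :=
          (hc.filter_mono nhdsWithin_le_nhds).and
            (eventually_nhdsWithin_of_eventually_nhds
              (eventually_of_mem (hUo.mem_nhds hw0U) fun _ hh => hh))
        rcases (h3.and self_mem_nhdsWithin).exists with ⟨w, ⟨hwe, hwU⟩, hwne⟩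
        exact hwne (hΦinj hwU hw0U hwe)
      · rw [ContinuousAt, Filter.tendsto_def]
        intro s hs
        have hs' : s ∩ ball (0:ℂ) 1 ∈ 𝓝 (ω z0) := Filter.inter_mem hs (hUo.mem_nhds hw0U)
        have himg : Φ '' (s ∩ ball (0:ℂ) 1) ∈ 𝓝 (Φ (ω z0)) := hle (Filter.image_mem_map hs')
        rw [(wmem z0 hz0).2] at himg
        have hconth : ContinuousAt h z0 := (hD.differentiableAt (hUo.mem_nhds hz0)).continuousAt
        filter_upwards [hconth himg, hUo.mem_nhds hz0] with z hzΦ hzU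
        rcases hzΦ with ⟨w, ⟨hws, hwU⟩, hw⟩
        have : ω z = w := hΦinj (wmem z hzU).1 hwU (by rw [(wmem z hzU).2, hw])
        rw [mem_preimage, this]; exact hws
    -- differentiability at points where deriv Φ (ω z0) ≠ 0
    have good : ∀ z0 ∈ ball (0:ℂ) 1, deriv Φ (ω z0) ≠ 0 → DifferentiableAt ℂ ω z0 := by
      intro z0 hz0 hder
      have hw0U : ω z0 ∈ ball (0:ℂ) 1 := (wmem z0 hz0).1
      obtain ⟨p, hp⟩ := ΦA _ hw0U
      have hps : HasStrictDerivAt Φ (deriv Φ (ω z0)) (ω z0) := by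
        have h1 := hp.hasStrictDerivAt
        rwa [← hp.deriv] at h1
      have hE := hps.hasStrictFDerivAt_equiv hder
      have hev : ∀ᶠ w in 𝓝 (ω z0), hE.localInverse _ _ _ (Φ w) = w :=
        hE.eventually_left_inverse
      have hev2 : ∀ᶠ z in 𝓝 z0, hE.localInverse _ _ _ (Φ (ω z)) = ω z :=
        (ωcont z0 hz0).eventually hev
      have heq : ω =ᶠ[𝓝 z0] fun z => hE.localInverse _ _ _ (h z) := by
        filter_upwards [hev2, eventually_of_mem (hUo.mem_nhds hz0) fun _ hh => hh] with z h2 hzU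
        rw [← (wmem z hzU).2, h2]
      have hdiff : DifferentiableAt ℂ (fun z => hE.localInverse _ _ _ (h z)) z0 := by
        have hloc : DifferentiableAt ℂ (hE.localInverse _ _ _) (h z0) := by
          have := hE.to_localInverse.differentiableAt
          rwa [(wmem z0 hz0).2] at this
        exact hloc.comp z0 (hD.differentiableAt (hUo.mem_nhds hz0))
      exact heq.differentiableAt_iff.2 hdiff
    -- full differentiability
    have ωD : DifferentiableOn ℂ ω (ball 0 1) := by
      intro z0 hz0
      suffices hsf : DifferentiableAt ℂ ω z0 from hsf.differentiableWithinAt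
      by_cases hder : deriv Φ (ω z0) = 0
      swap
      · exact good z0 hz0 hder
      have hw0U : ω z0 ∈ ball (0:ℂ) 1 := (wmem z0 hz0).1
      have ΦdA : AnalyticOnNhd ℂ (deriv Φ) (ball 0 1) := ΦA.deriv
      have hΦd_ne : ∀ᶠ w in 𝓝[≠] (ω z0), deriv Φ w ≠ 0 := by
        rcases (ΦdA _ hw0U).eventually_eq_zero_or_eventually_ne_zero with hz | hnz
        · exfalso
          have hEq : EqOn (deriv Φ) 0 (ball 0 1) :=
            ΦdA.eqOn_zero_of_preconnected_of_eventuallyEq_zero hUc hw0U hz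
          exact hΦd0 (hEq h0U)
        · exact hnz
      have hh_ne : ∀ᶠ z in 𝓝[≠] z0, h z ≠ h z0 := by
        rcases ((hA _ hz0).sub analyticAt_const).eventually_eq_zero_or_eventually_ne_zero with hz | hnz
        · exfalso
          have hev' : ∀ᶠ z in 𝓝 z0, h z = h z0 := by
            filter_upwards [hz] with w hw
            exact sub_eq_zero.1 hw
          have hEq : EqOn h (fun _ => h z0) (ball 0 1) :=
            hA.eqOn_of_preconnected_of_eventuallyEq analyticOnNhd_const hUc hz0 hev'
          have e1 := hEq h0U
          have e2 := hEq hz1U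
          rw [h_at0] at e1
          exact hz1 (by rw [e2, ← e1])
        · filter_upwards [hnz] with w hw
          exact sub_ne_zero.1 hw
      have hΦd_ne' : ∀ᶠ w in 𝓝 (ω z0), w ≠ ω z0 → deriv Φ w ≠ 0 := by
        rwa [eventually_nhdsWithin_iff] at hΦd_ne
      have hpull : ∀ᶠ z in 𝓝 z0, (ω z ≠ ω z0 → deriv Φ (ω z) ≠ 0) :=
        (ωcont z0 hz0).eventually hΦd_ne'
      have hfin : ∀ᶠ z in 𝓝[≠] z0, DifferentiableAt ℂ ω z := by
        have hU' : ∀ᶠ z in 𝓝[≠] z0, z ∈ ball (0:ℂ) 1 :=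
          eventually_nhdsWithin_of_eventually_nhds
            (eventually_of_mem (hUo.mem_nhds hz0) fun _ hh => hh)
        filter_upwards [hh_ne, hU', eventually_nhdsWithin_of_eventually_nhds hpull] with z hne hzU hp
        apply good z hzU
        intro hder'
        rcases eq_or_ne (ω z) (ω z0) with he | hne'
        · apply hne
          rw [← (wmem z hzU).2, ← (wmem z0 hz0).2, he]
        · exact hp hne' hder'
      have hfin2 : ∀ᶠ z in 𝓝 z0, z ∈ ({z0}ᶜ : Set ℂ) → DifferentiableAt ℂ ω z :=
        eventually_nhdsWithin_iff.1 hfin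
      rcases Metric.eventually_nhds_iff_ball.1
        (hfin2.and (eventually_of_mem (hUo.mem_nhds hz0) fun _ hh => hh)) with ⟨r, hr, hball⟩
      have hDon : DifferentiableOn ℂ ω (ball z0 r) := by
        rw [← Complex.differentiableOn_compl_singleton_and_continuousAt_iff
          (Metric.ball_mem_nhds z0 hr)]
        constructor
        · intro z hz
          exact ((hball z hz.1).1 (by simpa using hz.2)).differentiableWithinAt
        · exact ωcont z0 hz0
      exact hDon.differentiableAt (isOpen_ball.mem_nhds (mem_ball_self hr))
    -- now Schwarz
    have hmapsω : MapsTo ω (ball (0:ℂ) 1) (ball (0:ℂ) 1) := fun z hz => (wmem z hz).1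
    obtain ⟨hw1, hw2⟩ := schwarz_two ωD hmapsω ω0
    set w1 : ℂ := deriv ω 0 with hw1d
    set w2 : ℂ := deriv (dslope ω 0) 0 with hw2d
    have ωA : AnalyticOnNhd ℂ ω (ball 0 1) := ωD.analyticOnNhd hUo
    have ΦdA : AnalyticOnNhd ℂ (deriv Φ) (ball 0 1) := ΦA.deriv
    have hcomp : ∀ z ∈ ball (0:ℂ) 1, h z = (fun w => Φ (ω w)) z := by
      intro z hz; exact ((wmem z hz).2).symm
    have H1form : ∀ z ∈ ball (0:ℂ) 1, deriv h z
        = (fun w => deriv Φ (ω w) * deriv ω w) z := by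
      intro z hz
      have e1 : deriv h z = deriv (fun w => Φ (ω w)) z := derivEqOn hUo hcomp hz
      rw [e1]
      have e2 := deriv_comp z ((ΦA _ (wmem z hz).1).differentiableAt)
        ((ωD.differentiableAt (hUo.mem_nhds hz)))
      rw [Function.comp_def] at e2
      exact e2
    set ψ : ℂ → ℂ := dslope ω 0 with hψd
    have ψD : DifferentiableOn ℂ ψ (ball 0 1) := (Complex.differentiableOn_dslope hUnhds).2 ωD
    have ψA : AnalyticOnNhd ℂ ψ (ball 0 1) := ψD.analyticOnNhd hUo
    have ωzψ : ∀ z : ℂ, ω z = z * ψ z := by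
      intro z
      rcases eq_or_ne z 0 with rfl | hz0
      · rw [ω0]; ring
      · rw [hψd, dslope_of_ne _ hz0, slope_def_field, ω0, sub_zero, sub_zero]
        field_simp
    have derivω_form : ∀ z ∈ ball (0:ℂ) 1, deriv ω z
        = (fun w => ψ w + w * deriv ψ w) z := by
      intro z hz
      have e1 : deriv ω z = deriv (fun w => w * ψ w) z :=
        derivEqOn hUo (fun w _ => ωzψ w) hz
      rw [e1, deriv_fun_mul differentiableAt_fun_id ((ψA _ hz).differentiableAt)]
      simp
    have W2 : deriv (deriv ω) 0 = 2 * deriv ψ 0 := by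
      have e1 : deriv (deriv ω) 0 = deriv (fun w => ψ w + w * deriv ψ w) 0 :=
        derivEqOn hUo derivω_form h0U
      rw [e1, deriv_fun_add ((ψA _ h0U).differentiableAt)
        (differentiableAt_fun_id.fun_mul ((ψA.deriv _ h0U).differentiableAt)),
        deriv_fun_mul differentiableAt_fun_id ((ψA.deriv _ h0U).differentiableAt)]
      simp
      ring
    refine ⟨w1, w2, hw1, hw2, ?_, ?_⟩
    · -- first coefficient: deriv h 0 = deriv Φ 0 * w1
      have e1 := H1form 0 h0U
      simp only at e1
      rw [e1, ω0]
    · -- second coefficient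
      have e1 : deriv (deriv h) 0 = deriv (fun w => deriv Φ (ω w) * deriv ω w) 0 :=
        derivEqOn hUo H1form h0U
      have hd1 : DifferentiableAt ℂ (fun w => deriv Φ (ω w)) 0 := by
        exact ((ΦdA _ (by rw [ω0]; exact h0U)).differentiableAt).comp 0
          (ωD.differentiableAt (hUo.mem_nhds h0U))
      have hd2 : DifferentiableAt ℂ (deriv ω) 0 := (ωA.deriv _ h0U).differentiableAt
      rw [e1, deriv_fun_mul hd1 hd2]
      have e2 := deriv_comp 0 ((ΦdA _ (by rw [ω0]; exact h0U)).differentiableAt)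
        (ωD.differentiableAt (hUo.mem_nhds h0U))
      rw [Function.comp_def] at e2
      rw [e2, W2, ω0]
      have e3 : iteratedDeriv 2 Φ 0 = deriv (deriv Φ) 0 := by
        rw [iteratedDeriv_succ, iteratedDeriv_one]
      rw [e3]
      ring


private lemma derivEqOn' {U : Set ℂ} (hU : IsOpen U) {f₁ f₂ : ℂ → ℂ}
    (h : ∀ z ∈ U, f₁ z = f₂ z) {z : ℂ} (hz : z ∈ U) : deriv f₁ z = deriv f₂ z :=
  Filter.EventuallyEq.deriv_eq (Filter.eventuallyEq_of_mem (hU.mem_nhds hz) h)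

theorem toeplitz_T31_MPhi (Φ g : ℂ → ℂ)
    (hΦ : DifferentiableOn ℂ Φ (ball (0:ℂ) 1))
    (hΦinj : Set.InjOn Φ (ball (0:ℂ) 1))
    (hΦ0 : Φ 0 = 1)
    (hΦ1re : 0 < (deriv Φ 0).re) (hΦ1im : (deriv Φ 0).im = 0)
    (hΦ2im : (iteratedDeriv 2 Φ 0).im = 0)
    (hΦre : ∀ z ∈ ball (0:ℂ) 1, 0 < (Φ z).re)
    (hcond1 : 2 * (deriv Φ 0).re - 2 * (deriv Φ 0).re ^ 2 ≤ (iteratedDeriv 2 Φ 0).re)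
    (hcond2 : (iteratedDeriv 2 Φ 0).re ≤ 6 * (deriv Φ 0).re ^ 2 - 2 * (deriv Φ 0).re)
    (hg : DifferentiableOn ℂ g (ball (0:ℂ) 1))
    (h0 : g 0 = 0) (h1 : deriv g 0 = 1)
    (hsub : ∀ z ∈ ball (0:ℂ) 1, z ≠ 0 → z * deriv g z / g z ∈ Φ '' (ball (0:ℂ) 1)) :
    ‖2 * (iteratedDeriv 2 g 0 / 2) ^ 2 * (iteratedDeriv 3 g 0 / 6)
      - (iteratedDeriv 3 g 0 / 6) ^ 2 - 2 * (iteratedDeriv 2 g 0 / 2) ^ 2 + 1‖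
      ≤ 1 + 2 * (deriv Φ 0).re ^ 2 + (deriv Φ 0).re ^ 2 / 4 *
        (3 * (deriv Φ 0).re - (iteratedDeriv 2 Φ 0).re / (2 * (deriv Φ 0).re)) *
        ((iteratedDeriv 2 Φ 0).re / (2 * (deriv Φ 0).re) + (deriv Φ 0).re) := by
  have h0U : (0:ℂ) ∈ ball (0:ℂ) 1 := mem_ball_self one_pos
  have hUo : IsOpen (ball (0:ℂ) 1) := isOpen_ball
  have hUnhds : ball (0:ℂ) 1 ∈ 𝓝 (0:ℂ) := hUo.mem_nhds h0U
  have gA : AnalyticOnNhd ℂ g (ball 0 1) := hg.analyticOnNhd hUo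
  -- g has no zeros away from 0
  have gne : ∀ z ∈ ball (0:ℂ) 1, z ≠ 0 → g z ≠ 0 := by
    intro z hz hz0 hgz
    rcases hsub z hz hz0 with ⟨w, hw, hΦw⟩
    rw [hgz, div_zero] at hΦw
    have := hΦre w hw
    rw [hΦw] at this
    simp at this
  set u : ℂ → ℂ := dslope g 0 with hud
  have hu0 : u 0 = 1 := by rw [hud, dslope_same, h1]
  have huD : DifferentiableOn ℂ u (ball 0 1) := (Complex.differentiableOn_dslope hUnhds).2 hg
  have hgu : ∀ z : ℂ, g z = z * u z := by
    intro z
    rcases eq_or_ne z 0 with rfl | hz0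
    · rw [h0]; ring
    · rw [hud, dslope_of_ne _ hz0, slope_def_field, h0, sub_zero, sub_zero]
      field_simp
  have hune : ∀ z ∈ ball (0:ℂ) 1, u z ≠ 0 := by
    intro z hz
    rcases eq_or_ne z 0 with rfl | hz0
    · rw [hu0]; exact one_ne_zero
    · have hh := gne z hz hz0
      rw [hgu z] at hh
      exact right_ne_zero_of_mul hh
  set hfun : ℂ → ℂ := fun z => deriv g z / u z with hhd
  have h_at0 : hfun 0 = 1 := by rw [hhd]; simp [h1, hu0]
  have gA1 : AnalyticOnNhd ℂ (deriv g) (ball 0 1) := gA.deriv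
  have gA2 : AnalyticOnNhd ℂ (deriv (deriv g)) (ball 0 1) := gA1.deriv
  have gA3 : AnalyticOnNhd ℂ (deriv (deriv (deriv g))) (ball 0 1) := gA2.deriv
  have hD : DifferentiableOn ℂ hfun (ball 0 1) := (gA1.differentiableOn).div huD hune
  have hAn : AnalyticOnNhd ℂ hfun (ball 0 1) := hD.analyticOnNhd hUo
  have hA1 : AnalyticOnNhd ℂ (deriv hfun) (ball 0 1) := hAn.deriv
  have hA2 : AnalyticOnNhd ℂ (deriv (deriv hfun)) (ball 0 1) := hA1.deriv
  have hmem : ∀ z ∈ ball (0:ℂ) 1, hfun z ∈ Φ '' (ball (0:ℂ) 1) := by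
    intro z hz
    rcases eq_or_ne z 0 with rfl | hz0
    · rw [h_at0]; exact ⟨0, h0U, hΦ0⟩
    · have e1 : hfun z = z * deriv g z / g z := by
        rw [hhd]
        have e2 : u z = g z / z := by
          rw [hud, dslope_of_ne _ hz0, slope_def_field, h0, sub_zero, sub_zero]
        show deriv g z / u z = z * deriv g z / g z
        rw [e2, div_div_eq_mul_div, mul_comm]
      rw [e1]; exact hsub z hz hz0
  have eq0 : ∀ z ∈ ball (0:ℂ) 1, z * deriv g z = hfun z * g z := by
    intro z hz
    rw [hgu z]
    show z * deriv g z = deriv g z / u z * (z * u z)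
    field_simp [hune z hz]
  have eq1 : ∀ z ∈ ball (0:ℂ) 1, deriv g z + z * deriv (deriv g) z
      = deriv hfun z * g z + hfun z * deriv g z := by
    intro z hz
    have L := derivEqOn' hUo (f₁ := fun w => w * deriv g w)
      (f₂ := fun w => hfun w * g w) eq0 hz
    rw [deriv_fun_mul differentiableAt_fun_id ((gA1 _ hz).differentiableAt),
      deriv_fun_mul ((hAn _ hz).differentiableAt) ((gA _ hz).differentiableAt)] at L
    simpa using L
  have eq2 : ∀ z ∈ ball (0:ℂ) 1, 2 * deriv (deriv g) z + z * deriv (deriv (deriv g)) z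
      = deriv (deriv hfun) z * g z + deriv hfun z * deriv g z
        + (deriv hfun z * deriv g z + hfun z * deriv (deriv g) z) := by
    intro z hz
    have L := derivEqOn' hUo (f₁ := fun w => deriv g w + w * deriv (deriv g) w)
      (f₂ := fun w => deriv hfun w * g w + hfun w * deriv g w) eq1 hz
    rw [deriv_fun_add ((gA1 _ hz).differentiableAt)
        (differentiableAt_fun_id.fun_mul ((gA2 _ hz).differentiableAt)),
      deriv_fun_mul differentiableAt_fun_id ((gA2 _ hz).differentiableAt),
      deriv_fun_add (((hA1 _ hz).differentiableAt).fun_mul ((gA _ hz).differentiableAt))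
        (((hAn _ hz).differentiableAt).fun_mul ((gA1 _ hz).differentiableAt)),
      deriv_fun_mul ((hA1 _ hz).differentiableAt) ((gA _ hz).differentiableAt),
      deriv_fun_mul ((hAn _ hz).differentiableAt) ((gA1 _ hz).differentiableAt)] at L
    simp only [deriv_id''] at L
    linear_combination L
  have eq3 := derivEqOn' hUo
    (f₁ := fun w => 2 * deriv (deriv g) w + w * deriv (deriv (deriv g)) w)
    (f₂ := fun w => deriv (deriv hfun) w * g w + deriv hfun w * deriv g w
      + (deriv hfun w * deriv g w + hfun w * deriv (deriv g) w)) eq2 h0U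
  rw [deriv_fun_add (((gA2 _ h0U).differentiableAt).const_mul 2)
      (differentiableAt_fun_id.fun_mul ((gA3 _ h0U).differentiableAt)),
    deriv_const_mul 2 ((gA2 _ h0U).differentiableAt),
    deriv_fun_mul differentiableAt_fun_id ((gA3 _ h0U).differentiableAt),
    deriv_fun_add ((((hA2 _ h0U).differentiableAt).fun_mul ((gA _ h0U).differentiableAt)).fun_add
        (((hA1 _ h0U).differentiableAt).fun_mul ((gA1 _ h0U).differentiableAt)))
      ((((hA1 _ h0U).differentiableAt).fun_mul ((gA1 _ h0U).differentiableAt)).fun_add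
        (((hAn _ h0U).differentiableAt).fun_mul ((gA2 _ h0U).differentiableAt))),
    deriv_fun_add (((hA2 _ h0U).differentiableAt).fun_mul ((gA _ h0U).differentiableAt))
      (((hA1 _ h0U).differentiableAt).fun_mul ((gA1 _ h0U).differentiableAt)),
    deriv_fun_add (((hA1 _ h0U).differentiableAt).fun_mul ((gA1 _ h0U).differentiableAt))
      (((hAn _ h0U).differentiableAt).fun_mul ((gA2 _ h0U).differentiableAt)),
    deriv_fun_mul ((hA2 _ h0U).differentiableAt) ((gA _ h0U).differentiableAt),
    deriv_fun_mul ((hA1 _ h0U).differentiableAt) ((gA1 _ h0U).differentiableAt),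
    deriv_fun_mul ((hAn _ h0U).differentiableAt) ((gA2 _ h0U).differentiableAt)] at eq3
  simp only [deriv_id''] at eq3
  rw [h0, h1, h_at0] at eq3
  have idA : deriv (deriv g) 0 = 2 * deriv hfun 0 := by
    have e := eq2 0 h0U
    rw [h0, h1, h_at0] at e
    linear_combination e
  have idB : 2 * deriv (deriv (deriv g)) 0
      = 3 * deriv (deriv hfun) 0 + 3 * deriv hfun 0 * deriv (deriv g) 0 := by
    linear_combination eq3
  -- subordination bounds
  have hΦd0 : deriv Φ 0 ≠ 0 := by
    intro hh
    rw [hh] at hΦ1re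
    simp at hΦ1re
  obtain ⟨w1, w2, hxw1, hyw2, hH1, hH2⟩ :=
    subordination_bounds Φ hfun hΦ hΦinj hΦd0 hΦ0 hD h_at0 hmem
  -- pass to real parameters
  set β : ℝ := (deriv Φ 0).re with hβdef
  set γ : ℝ := (iteratedDeriv 2 Φ 0).re with hγdef
  have hβc : deriv Φ 0 = (β:ℂ) := by
    apply Complex.ext
    · simp [hβdef]
    · simpa using hΦ1im
  have hγc : iteratedDeriv 2 Φ 0 = (γ:ℂ) := by
    apply Complex.ext
    · simp [hγdef]
    · simpa using hΦ2im
  have hg2 : iteratedDeriv 2 g 0 = deriv (deriv g) 0 := by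
    rw [iteratedDeriv_succ, iteratedDeriv_one]
  have hg3 : iteratedDeriv 3 g 0 = deriv (deriv (deriv g)) 0 := by
    rw [iteratedDeriv_succ, iteratedDeriv_succ, iteratedDeriv_one]
  have vH1 : deriv hfun 0 = (β:ℂ) * w1 := by rw [hH1, hβc]
  have vD2 : deriv (deriv g) 0 = 2*(β:ℂ)*w1 := by rw [idA, vH1]; ring
  have vH2 : deriv (deriv hfun) 0 = (γ:ℂ)*w1^2 + 2*(β:ℂ)*w2 := by
    rw [hH2, hγc, hβc]
  have vD3 : deriv (deriv (deriv g)) 0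
      = (3*((γ:ℂ)*w1^2 + 2*(β:ℂ)*w2) + 6*(β:ℂ)^2*w1^2)/2 := by
    have e := idB
    rw [vH2, vH1, vD2] at e
    linear_combination e/2
  have hb2 : iteratedDeriv 2 g 0 / 2 = (β:ℂ) * w1 := by rw [hg2, vD2]; ring
  have hb3 : iteratedDeriv 3 g 0 / 6
      = ((γ:ℂ)*w1^2 + 2*(β:ℂ)*w2 + 2*(β:ℂ)^2*w1^2)/4 := by
    rw [hg3, vD3]; ring
  rw [hb2, hb3]
  -- rewrite the target quantity
  have hTeq : 2 * ((β:ℂ) * w1) ^ 2 * (((γ:ℂ)*w1^2 + 2*(β:ℂ)*w2 + 2*(β:ℂ)^2*w1^2)/4)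
      - (((γ:ℂ)*w1^2 + 2*(β:ℂ)*w2 + 2*(β:ℂ)^2*w1^2)/4) ^ 2 - 2 * ((β:ℂ) * w1) ^ 2 + 1
      = ((β^4 - (γ/2 - β^2)^2/4 : ℝ):ℂ)*w1^4 - 2*((β:ℝ):ℂ)^2*w1^2 + 1
        - ((β^2/4 : ℝ):ℂ)*w2^2 - ((β*(γ/2 - β^2)/2 : ℝ):ℂ)*(w1^2*w2) := by
    push_cast
    ring
  rw [hTeq]
  -- triangle inequality
  set x : ℝ := ‖w1‖ with hxdef
  set y : ℝ := ‖w2‖ with hydef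
  have hβpos : 0 < β := hΦ1re
  have hc1' : β - 2*β^2 ≤ γ/2 - β^2 := by linarith
  have hc2' : γ/2 - β^2 ≤ 2*β^2 - β := by nlinarith
  have hβhalf : 1/2 ≤ β := by nlinarith
  have hR1 : (0:ℝ) ≤ β^4 - (γ/2 - β^2)^2/4 := by
    have := abs_le.2 ⟨by linarith, hc2'⟩
    nlinarith [_root_.sq_abs (γ/2 - β^2), abs_nonneg (γ/2 - β^2)]
  have habs : ‖((β^4 - (γ/2 - β^2)^2/4 : ℝ):ℂ)*w1^4 - 2*((β:ℝ):ℂ)^2*w1^2 + 1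
        - ((β^2/4 : ℝ):ℂ)*w2^2 - ((β*(γ/2 - β^2)/2 : ℝ):ℂ)*(w1^2*w2)‖
      ≤ (β^4 - (γ/2 - β^2)^2/4)*x^4 + 2*β^2*x^2 + 1 + (β^2/4)*y^2
        + (β*|γ/2 - β^2|/2)*x^2*y := by
    calc ‖((β^4 - (γ/2 - β^2)^2/4 : ℝ):ℂ)*w1^4 - 2*((β:ℝ):ℂ)^2*w1^2 + 1
          - ((β^2/4 : ℝ):ℂ)*w2^2 - ((β*(γ/2 - β^2)/2 : ℝ):ℂ)*(w1^2*w2)‖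
        ≤ ‖((β^4 - (γ/2 - β^2)^2/4 : ℝ):ℂ)*w1^4 - 2*((β:ℝ):ℂ)^2*w1^2 + 1
            - ((β^2/4 : ℝ):ℂ)*w2^2‖
          + ‖((β*(γ/2 - β^2)/2 : ℝ):ℂ)*(w1^2*w2)‖ := cabs_sub_le' _ _
      _ ≤ (‖((β^4 - (γ/2 - β^2)^2/4 : ℝ):ℂ)*w1^4 - 2*((β:ℝ):ℂ)^2*w1^2 + 1‖
            + ‖((β^2/4 : ℝ):ℂ)*w2^2‖)
          + ‖((β*(γ/2 - β^2)/2 : ℝ):ℂ)*(w1^2*w2)‖ := by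
            exact add_le_add_left (cabs_sub_le' _ _) _
      _ ≤ ((‖((β^4 - (γ/2 - β^2)^2/4 : ℝ):ℂ)*w1^4 - 2*((β:ℝ):ℂ)^2*w1^2‖
            + ‖(1:ℂ)‖)
            + ‖((β^2/4 : ℝ):ℂ)*w2^2‖)
          + ‖((β*(γ/2 - β^2)/2 : ℝ):ℂ)*(w1^2*w2)‖ := by
            exact add_le_add_left (add_le_add_left (norm_add_le _ _) _) _
      _ ≤ (((‖((β^4 - (γ/2 - β^2)^2/4 : ℝ):ℂ)*w1^4‖
            + ‖2*((β:ℝ):ℂ)^2*w1^2‖) + ‖(1:ℂ)‖)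
            + ‖((β^2/4 : ℝ):ℂ)*w2^2‖)
          + ‖((β*(γ/2 - β^2)/2 : ℝ):ℂ)*(w1^2*w2)‖ := by
            exact add_le_add_left (add_le_add_left (add_le_add_left (cabs_sub_le' _ _) _) _) _
      _ = (β^4 - (γ/2 - β^2)^2/4)*x^4 + 2*β^2*x^2 + 1 + (β^2/4)*y^2
          + (β*|γ/2 - β^2|/2)*x^2*y := by
        simp only [norm_mul, norm_pow, Complex.norm_real, Real.norm_eq_abs, norm_one, Complex.norm_two,
          abs_mul, abs_div, _root_.abs_pow]
        rw [_root_.abs_of_nonneg hR1, _root_.abs_of_nonneg hβpos.le, hxdef, hydef]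
        norm_num [_root_.sq_abs]
        ring
  have hx0 : 0 ≤ x := norm_nonneg w1
  have hy0 : 0 ≤ y := norm_nonneg w2
  have hfin := final_real_ineq hc1' hc2' hβpos hx0 hxw1 hy0 hyw2
  have hRHS : 1 + 2*β^2 + β^2/4 * (3*β - γ/(2*β)) * (γ/(2*β) + β)
      = 1 + 2*β^2 + (β^4 - (γ/2 - β^2)^2/4) := by
    field_simp
    ring
  calc ‖_‖ ≤ (β^4 - (γ/2 - β^2)^2/4)*x^4 + 2*β^2*x^2 + 1 + (β^2/4)*y^2
        + (β*|γ/2 - β^2|/2)*x^2*y := habs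
    _ ≤ 1 + 2*β^2 + (β^4 - (γ/2 - β^2)^2/4) := by linarith
    _ = 1 + 2*β^2 + β^2/4 * (3*β - γ/(2*β)) * (γ/(2*β) + β) := hRHS.symm
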